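/- arXiv:2410.02889 — 2 statements merged into one kernel-verified Lean document; each statement's English description precedes it below -/
import Mathlib

section
/- Let 0<α<n and let 𝒟 be a dyadic grid in ℝ^n. For all nonnegative measurable functions f,g on ℝ^n and every x∈ℝ^n, the dyadic bilinear fractional integral satisfies BI^𝒟_α(f,g)(x) ≤ Σ_{Q∈𝒟}|Q|^{α/n−1}[(f·1_{3Q})∗(g·1_{3Q})](2x)·1_Q(x), where (F∗G)(w)=∫_{ℝ^n}F(w−z)G(z)dz denotes convolution. -/
open MeasureTheory ENNReal Set Filter

noncomputable section

abbrev Euc (n : ℕ) := EuclideanSpace ℝ (Fin n)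

/-- An axis-parallel half-open cube in `ℝⁿ`: a translate of `[0, ℓ)ⁿ`. -/
structure Cube (n : ℕ) where
  corner : Fin n → ℝ
  side : ℝ
  side_pos : 0 < side

namespace Cube

/-- The underlying set of a cube. -/
def set {n : ℕ} (Q : Cube n) : Set (Euc n) :=
  {x | ∀ i, Q.corner i ≤ x i ∧ x i < Q.corner i + Q.side}

/-- The volume `|Q| = ℓ(Q)^n`. -/
def vol {n : ℕ} (Q : Cube n) : ℝ := Q.side ^ n

/-- The concentric dilate `3Q`. -/
def three {n : ℕ} (Q : Cube n) : Cube n :=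
  ⟨fun i => Q.corner i - Q.side, 3 * Q.side, by have := Q.side_pos; linarith⟩

end Cube

/-- A weight: a nonnegative locally integrable function. -/
def IsWeight {n : ℕ} (v : Euc n → ℝ) : Prop :=
  (∀ x, 0 ≤ v x) ∧ LocallyIntegrable v

/-- Weighted `L^p` (quasi)norm `(∫ |f|^p v)^{1/p}`, valued in `ℝ≥0∞`. -/
def wNorm {n : ℕ} (p : ℝ) (v f : Euc n → ℝ) : ℝ≥0∞ :=
  (∫⁻ x, ENNReal.ofReal (|f x| ^ p * v x)) ^ (1 / p)

/-- Weighted `L^p` norm of an `ℝ≥0∞`-valued function. -/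
def wNormE {n : ℕ} (p : ℝ) (v : Euc n → ℝ) (F : Euc n → ℝ≥0∞) : ℝ≥0∞ :=
  (∫⁻ x, F x ^ p * ENNReal.ofReal (v x)) ^ (1 / p)

/-- The bilinear fractional integral operator `BI_α`. -/
def BI (n : ℕ) (α : ℝ) (f g : Euc n → ℝ) (x : Euc n) : ℝ :=
  ∫ y, f (x - y) * g (x + y) / ‖y‖ ^ ((n : ℝ) - α)

/-- The bilinear fractional integral operator, `ℝ≥0∞`-valued version for
nonnegative functions. -/
def BIpos (n : ℕ) (α : ℝ) (f g : Euc n → ℝ) (x : Euc n) : ℝ≥0∞ :=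
  ∫⁻ y, ENNReal.ofReal (f (x - y)) * ENNReal.ofReal (g (x + y)) /
    ENNReal.ofReal (‖y‖ ^ ((n : ℝ) - α))

/-- The bilinear fractional maximal operator `BM_α`. -/
def BM (n : ℕ) (α : ℝ) (f g : Euc n → ℝ) (x : Euc n) : ℝ≥0∞ :=
  ⨆ (Q : Cube n) (_ : x ∈ Q.set),
    ENNReal.ofReal (Q.vol ^ (α / (n : ℝ) - 1)) *
      ∫⁻ y in {y : Euc n | ∀ i, |y i| ≤ Q.side}, ENNReal.ofReal |f (x - y) * g (x + y)|

/-- The bi-sublinear fractional maximal operator `M^{r,s}_α`. -/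
def Mrs (n : ℕ) (α r s : ℝ) (f g : Euc n → ℝ) (x : Euc n) : ℝ≥0∞ :=
  ⨆ (Q : Cube n) (_ : x ∈ Q.set),
    ENNReal.ofReal (Q.vol ^ (α / (n : ℝ))) *
      ((∫⁻ y in Q.set, ENNReal.ofReal (|f y| ^ r)) / ENNReal.ofReal Q.vol) ^ (1 / r) *
      ((∫⁻ y in Q.set, ENNReal.ofReal (|g y| ^ s)) / ENNReal.ofReal Q.vol) ^ (1 / s)

/-- `M^{r,s}_α` restricted to a family of cubes `𝒟`. -/
def MrsD (n : ℕ) (α r s : ℝ) (𝒟 : Set (Cube n)) (f g : Euc n → ℝ) (x : Euc n) : ℝ≥0∞ :=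
  ⨆ (Q : Cube n) (_ : Q ∈ 𝒟) (_ : x ∈ Q.set),
    ENNReal.ofReal (Q.vol ^ (α / (n : ℝ))) *
      ((∫⁻ y in Q.set, ENNReal.ofReal (|f y| ^ r)) / ENNReal.ofReal Q.vol) ^ (1 / r) *
      ((∫⁻ y in Q.set, ENNReal.ofReal (|g y| ^ s)) / ENNReal.ofReal Q.vol) ^ (1 / s)

/-- Conjugate exponent `r' = r/(r-1)`. -/
def conjExp (r : ℝ) : ℝ := r / (r - 1)

/-- A Young function: convex, continuous, strictly increasing on `[0,∞)`,
vanishing at `0`, and superlinear at infinity. -/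
structure IsYoung (Φ : ℝ → ℝ) : Prop where
  convexOn : ConvexOn ℝ (Ici 0) Φ
  continuousOn : ContinuousOn Φ (Ici 0)
  strictMonoOn : StrictMonoOn Φ (Ici 0)
  map_zero : Φ 0 = 0
  tendsto_div_atTop : Tendsto (fun t => Φ t / t) atTop atTop

/-- The `B_p` integrability condition for a Young function. -/
def BCond (p : ℝ) (Φ : ℝ → ℝ) : Prop :=
  ∃ c > (0 : ℝ), IntegrableOn (fun t => Φ t / t ^ (p + 1)) (Ioi c)

/-- The `B_{p,q}` integrability condition for a Young function. -/
def BCond2 (p q : ℝ) (Φ : ℝ → ℝ) : Prop :=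
  ∃ c > (0 : ℝ), IntegrableOn (fun t => Φ t ^ (q / p) / t ^ (q + 1)) (Ioi c)

/-- `g` is the inverse of `f` on `[0,∞)`. -/
def InvPairOn (f g : ℝ → ℝ) : Prop :=
  (∀ t ∈ Ici (0 : ℝ), g (f t) = t) ∧ (∀ t ∈ Ici (0 : ℝ), f (g t) = t)

/-- The class `𝒴_{1/a, B}`: Young functions `φ` such that `t ↦ t^a / φ⁻¹(t)`
is the inverse of a Young function satisfying the condition `B`. -/
def YClass (a : ℝ) (B : (ℝ → ℝ) → Prop) (φ : ℝ → ℝ) : Prop :=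
  IsYoung φ ∧ ∃ φinv ψ ψinv : ℝ → ℝ, InvPairOn φ φinv ∧ InvPairOn ψ ψinv ∧
    IsYoung ψ ∧ B ψ ∧ ∀ t ∈ Ici (0 : ℝ), ψinv t = t ^ a / φinv t

/-- The class `𝒴^k_{1/a, B}`: Young functions `φ` such that
`t ↦ t^a / (φ⁻¹(t) · log(1+t)^k)` is the inverse of a Young function
satisfying the condition `B`. -/
def YClassLog (a : ℝ) (k : ℕ) (B : (ℝ → ℝ) → Prop) (φ : ℝ → ℝ) : Prop :=
  IsYoung φ ∧ ∃ φinv ψ ψinv : ℝ → ℝ, InvPairOn φ φinv ∧ InvPairOn ψ ψinv ∧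
    IsYoung ψ ∧ B ψ ∧
    ∀ t ∈ Ici (0 : ℝ), ψinv t = t ^ a / (φinv t * Real.log (1 + t) ^ k)

/-- The Orlicz average `‖f‖_{Φ,Q}` of `f` over the cube `Q`. -/
def orliczAvg {n : ℕ} (Φ : ℝ → ℝ) (Q : Cube n) (f : Euc n → ℝ) : ℝ :=
  sInf {lam : ℝ | 0 < lam ∧ (∫ x in Q.set, Φ (|f x| / lam)) / Q.vol ≤ 1}

/-- The normalized `L^r` average `‖f‖_{L^r,Q}` over a cube. -/
def lrAvg {n : ℕ} (r : ℝ) (Q : Cube n) (f : Euc n → ℝ) : ℝ :=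
  ((∫ x in Q.set, |f x| ^ r) / Q.vol) ^ (1 / r)

/-- The bilinear `A_{[ρ₁,ρ₂],σ}` condition for a pair of weights. -/
def APair {n : ℕ} (ρ₁ ρ₂ σ : ℝ) (w₁ w₂ : Euc n → ℝ) : Prop :=
  ∃ C : ℝ, ∀ Q : Cube n,
    ((∫ x in Q.set, (w₁ x * w₂ x) ^ σ) / Q.vol) ^ (1 / σ) *
      ((∫ x in Q.set, w₁ x ^ (-conjExp ρ₁)) / Q.vol) ^ (1 / conjExp ρ₁) *
      ((∫ x in Q.set, w₂ x ^ (-conjExp ρ₂)) / Q.vol) ^ (1 / conjExp ρ₂) ≤ C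

/-- The Muckenhoupt `A_ρ` condition. -/
def MuckAp (n : ℕ) (ρ : ℝ) (w : Euc n → ℝ) : Prop :=
  ∃ C : ℝ, ∀ Q : Cube n,
    ((∫ x in Q.set, w x) / Q.vol) *
      ((∫ x in Q.set, w x ^ (-(1 / (ρ - 1)))) / Q.vol) ^ (ρ - 1) ≤ C

/-- The `BMO` seminorm, valued in `ℝ≥0∞`. -/
def bmoNorm (n : ℕ) (b : Euc n → ℝ) : ℝ≥0∞ :=
  ⨆ Q : Cube n,
    (∫⁻ x in Q.set, ENNReal.ofReal |b x - (∫ y in Q.set, b y) / Q.vol|) /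
      ENNReal.ofReal Q.vol

/-- A dyadic grid: a countable collection of cubes of dyadic side lengths such
that the cubes of a fixed side length partition `ℝⁿ` and any two cubes are
either disjoint or nested. -/
def IsDyadicGrid {n : ℕ} (𝒟 : Set (Cube n)) : Prop :=
  𝒟.Countable ∧
  (∀ Q ∈ 𝒟, ∃ k : ℤ, Q.side = (2 : ℝ) ^ k) ∧
  (∀ k : ℤ, ∀ x : Euc n, ∃! Q : Cube n, Q ∈ 𝒟 ∧ Q.side = (2 : ℝ) ^ k ∧ x ∈ Q.set) ∧
  ∀ Q ∈ 𝒟, ∀ P ∈ 𝒟, Q.set ∩ P.set = ∅ ∨ Q.set ⊆ P.set ∨ P.set ⊆ Q.set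

/-- A sparse family of cubes. -/
def IsSparse {n : ℕ} (𝒮 : Set (Cube n)) : Prop :=
  ∃ E : Cube n → Set (Euc n),
    (∀ Q ∈ 𝒮, E Q ⊆ Q.set ∧ ENNReal.ofReal Q.vol ≤ 2 * volume (E Q)) ∧
    𝒮.Pairwise fun Q P => Disjoint (E Q) (E P)

/-- The iterated commutator `[b⃗, BI_α]_{β⃗}`, where the value `0 : Fin 2`
denotes a first-component commutator and `1 : Fin 2` a second-component one;
`b (Fin.last N)` is the outermost commutator. -/
def iterComm (n : ℕ) (α : ℝ) : (N : ℕ) → (Fin N → Euc n → ℝ) → (Fin N → Fin 2) →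
    (Euc n → ℝ) → (Euc n → ℝ) → Euc n → ℝ
  | 0, _, _, f, g => BI n α f g
  | N + 1, b, β, f, g => fun x =>
      b (Fin.last N) x *
          iterComm n α N (fun i => b i.castSucc) (fun i => β i.castSucc) f g x -
        (if β (Fin.last N) = 0 then
          iterComm n α N (fun i => b i.castSucc) (fun i => β i.castSucc)
            (fun y => b (Fin.last N) y * f y) g x
        else
          iterComm n α N (fun i => b i.castSucc) (fun i => β i.castSucc) f
            (fun y => b (Fin.last N) y * g y) x)

/-- The shifted dyadic grid `𝒟^t`. -/
def shiftedGrid (n : ℕ) (t : Fin n → ℝ) : Set (Cube n) :=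
  {Q | ∃ (k : ℤ) (m : Fin n → ℤ),
    Q.side = (2 : ℝ) ^ (-k) ∧
    ∀ i, Q.corner i = (2 : ℝ) ^ (-k) * ((m i : ℝ) + (-1 : ℝ) ^ k * t i)}

/-- The weight factor in the two-weight characterization for `M^{r,s}_α`,
with the convention for the endpoint `ρ = r`. -/
def vFactor {n : ℕ} (r ρ : ℝ) (Q : Cube n) (v : Euc n → ℝ) : ℝ :=
  if r < ρ then ((∫ x in Q.set, v x ^ (-(r / (ρ - r)))) / Q.vol) ^ ((ρ - r) / (r * ρ))
  else (essInf v (volume.restrict Q.set))⁻¹ ^ (1 / ρ)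

/- Substituting `z = x + y` turns the convolution at `2x` into an integral of `F (x - y) G (x + y)`;
for `x ∈ Q` and `|y|_∞ ≤ ℓ(Q)` both `x - y` and `x + y` lie in `3Q`, so cutting `f` and `g` off
to `3Q` does not change the integrand on the region of integration. -/

theorem lintegral_two_smul_sub_mul_eq {E : Type*} [AddCommGroup E] [Module ℝ E]
    [MeasurableSpace E] [MeasurableAdd E] (μ : Measure E) [μ.IsAddLeftInvariant]
    (F G : E → ℝ≥0∞) (x : E) :
    ∫⁻ z, F ((2 : ℝ) • x - z) * G z ∂μ = ∫⁻ y, F (x - y) * G (x + y) ∂μ := by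
  rw [← lintegral_add_left_eq_self _ x, two_smul]
  simp only [add_sub_add_left_eq_sub]

namespace Cube

theorem mem_three_of_abs_sub_le {n : ℕ} {Q : Cube n} {x z : Euc n} (hx : x ∈ Q.set)
    (hz : ∀ i, |z i - x i| ≤ Q.side) : z ∈ Q.three.set := by
  intro i
  obtain ⟨hlo, hhi⟩ := abs_le.mp (hz i)
  obtain ⟨hxlo, hxhi⟩ := hx i
  simp only [three]
  constructor <;> linarith

theorem setLIntegral_le_lintegral_indicator_three {n : ℕ} {Q : Cube n} {x : Euc n}
    (hx : x ∈ Q.set) (F G : Euc n → ℝ≥0∞) :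
    ∫⁻ y in {y : Euc n | ∀ i, |y i| ≤ Q.side}, F (x - y) * G (x + y) ≤
      ∫⁻ y, Q.three.set.indicator F (x - y) * Q.three.set.indicator G (x + y) := by
  have hS : MeasurableSet {y : Euc n | ∀ i, |y i| ≤ Q.side} := by
    simp only [ofPred_forall]
    exact MeasurableSet.iInter fun i => measurableSet_le (by fun_prop) measurable_const
  refine (setLIntegral_mono' hS fun y hy => ?_).trans (setLIntegral_le_lintegral _ _)
  have hsub : x - y ∈ Q.three.set :=
    mem_three_of_abs_sub_le hx fun i => by simpa [abs_neg] using hy i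
  have hadd : x + y ∈ Q.three.set :=
    mem_three_of_abs_sub_le hx fun i => by simpa using hy i
  rw [indicator_of_mem hsub, indicator_of_mem hadd]

end Cube

theorem stmt15_general {n : ℕ} {α : ℝ} (𝒟 : Set (Cube n)) (f g : Euc n → ℝ) (x : Euc n) :
    (∑' Q : 𝒟, ENNReal.ofReal (Q.1.vol ^ (α / (n : ℝ) - 1)) *
        (∫⁻ y in {y : Euc n | ∀ i, |y i| ≤ Q.1.side},
          ENNReal.ofReal (f (x - y)) * ENNReal.ofReal (g (x + y))) *
        Q.1.set.indicator (fun _ => (1 : ℝ≥0∞)) x) ≤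
    ∑' Q : 𝒟, ENNReal.ofReal (Q.1.vol ^ (α / (n : ℝ) - 1)) *
        (∫⁻ z, Q.1.three.set.indicator (fun y => ENNReal.ofReal (f y)) ((2 : ℝ) • x - z) *
          Q.1.three.set.indicator (fun y => ENNReal.ofReal (g y)) z) *
        Q.1.set.indicator (fun _ => (1 : ℝ≥0∞)) x := by
  refine ENNReal.tsum_le_tsum fun Q => ?_
  by_cases hx : x ∈ Q.1.set
  · gcongr _ * ?_ * _
    rw [lintegral_two_smul_sub_mul_eq]
    exact Q.1.setLIntegral_le_lintegral_indicator_three hx _ _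
  · simp [indicator_of_notMem hx]

theorem stmt15 {n : ℕ} (hn : 0 < n) {α : ℝ} (hα : 0 < α) (hαn : α < n)
    (𝒟 : Set (Cube n)) (h𝒟 : IsDyadicGrid 𝒟)
    (f g : Euc n → ℝ) (hf : Measurable f) (hg : Measurable g)
    (hf0 : ∀ x, 0 ≤ f x) (hg0 : ∀ x, 0 ≤ g x) (x : Euc n) :
    (∑' Q : 𝒟, ENNReal.ofReal (Q.1.vol ^ (α / (n : ℝ) - 1)) *
        (∫⁻ y in {y : Euc n | ∀ i, |y i| ≤ Q.1.side},
          ENNReal.ofReal (f (x - y)) * ENNReal.ofReal (g (x + y))) *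
        Q.1.set.indicator (fun _ => (1 : ℝ≥0∞)) x) ≤
    ∑' Q : 𝒟, ENNReal.ofReal (Q.1.vol ^ (α / (n : ℝ) - 1)) *
        (∫⁻ z, Q.1.three.set.indicator (fun y => ENNReal.ofReal (f y)) ((2 : ℝ) • x - z) *
          Q.1.three.set.indicator (fun y => ENNReal.ofReal (g y)) z) *
        Q.1.set.indicator (fun _ => (1 : ℝ≥0∞)) x :=
  stmt15_general 𝒟 f g x

end
end

section
/- Let 𝒟 be a dyadic grid in ℝ^n, let p_1,p_2>1 and 1<m_1≤p_1, 1<m_2≤p_2, and let f,g be nonnegative, bounded, compactly supported functions on ℝ^n. For each k∈ℤ, let {Q_{k,j}}_j be the collection of cubes of 𝒟 that are maximal with respect to the property ‖f‖_{L^{p_1/m_1},Q}·‖g‖_{L^{p_2/m_2},Q} > 2^{k(n+1)(m_1/p_1+m_2/p_2)}. Then for every k and j, |Q_{k,j} ∩ ⋃_i Q_{k+1,i}| ≤ |Q_{k,j}|/2; consequently, setting E_{k,j}=Q_{k,j}∖⋃_i Q_{k+1,i}, the sets {E_{k,j}}_{k,j} are pairwise disjoint, |Q_{k,j}|≤2|E_{k,j}|,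 and the family {Q_{k,j}}_{k,j} is sparse. -/
open MeasureTheory ENNReal Set Filter

noncomputable section

/-!
Write `A Q = ‖f‖_{L^{r₁},Q} ‖g‖_{L^{r₂},Q}` with `rᵢ = pᵢ/mᵢ`, `s = 1/r₁ + 1/r₂`, and
`θ k = 2^{k(n+1)s}`, so that the `Q_{k,j}` are the maximal cubes with `A Q > θ k`. The dyadic
parent `R` of `Q = Q_{k,j}` is not one of them, so `A R ≤ θ k`, while every `P = Q_{k+1,i}`
meeting `Q` lies inside `Q` and has `A P > θ (k+1)`. Raising to the power `1/s` turns
`A P ^ (1/s) |P|` into `(∫_P |f|^{r₁})^a (∫_P |g|^{r₂})^b` with `a + b = 1`, so summing over the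
disjoint `P` and applying Hölder's inequality for sums gives
`2^{(k+1)(n+1)} ∑ |P| ≤ 2^{k(n+1)} |R| = 2^{k(n+1)} 2^n |Q|`, that is, `∑ |P| ≤ |Q|/2`.

Since `f` and `g` are bounded with compact support, `A Q ≤ C |Q|^{-s}`, so every cube with
`A Q > θ k` lies in a maximal one. Hence each `Q_{k',j}` with `k' > k` is covered by the
`Q_{k+1,i}`, and the sets `E_{k,j}` are pairwise disjoint.
-/

namespace Cube

variable {n : ℕ}

lemma vol_pos (Q : Cube n) : 0 < Q.vol := pow_pos Q.side_pos n

lemma set_eq_preimage_pi (Q : Cube n) : Q.set =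
    (MeasurableEquiv.toLp 2 (Fin n → ℝ)).symm ⁻¹'
      univ.pi fun i => Ico (Q.corner i) (Q.corner i + Q.side) := by
  ext x
  simp [Cube.set, MeasurableEquiv.coe_toLp_symm, Set.mem_pi, Ico]

lemma measurableSet_set (Q : Cube n) : MeasurableSet Q.set := by
  rw [set_eq_preimage_pi]
  exact MeasurableEquiv.measurable _ (MeasurableSet.univ_pi fun _ => measurableSet_Ico)

lemma volume_set (Q : Cube n) : volume Q.set = ENNReal.ofReal Q.vol := by
  rw [set_eq_preimage_pi, (EuclideanSpace.volume_preserving_symm_measurableEquiv_toLp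
    (Fin n)).measure_preimage (MeasurableSet.univ_pi fun _ => measurableSet_Ico).nullMeasurableSet,
    volume_pi, Measure.pi_pi]
  simp [Real.volume_Ico, Cube.vol, ENNReal.ofReal_pow Q.side_pos.le]

lemma corner_mem_set (Q : Cube n) : WithLp.toLp 2 Q.corner ∈ Q.set :=
  fun _ => ⟨le_rfl, by simpa using Q.side_pos⟩

lemma side_le_side_of_set_subset (hn : 0 < n) {Q P : Cube n} (h : Q.set ⊆ P.set) :
    Q.side ≤ P.side := by
  have hvol : Q.vol ≤ P.vol := by
    simpa [volume_set, ENNReal.ofReal_le_ofReal_iff P.vol_pos.le] using measure_mono (μ := volume) h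
  exact (pow_le_pow_iff_left₀ Q.side_pos.le P.side_pos.le hn.ne').1 hvol

end Cube

namespace IsDyadicGrid

variable {n : ℕ} {𝒟 : Set (Cube n)}

lemma subset_or_subset (h𝒟 : IsDyadicGrid 𝒟) {Q P : Cube n} (hQ : Q ∈ 𝒟) (hP : P ∈ 𝒟)
    (hQP : (Q.set ∩ P.set).Nonempty) : Q.set ⊆ P.set ∨ P.set ⊆ Q.set :=
  (h𝒟.2.2.2 Q hQ P hP).resolve_left hQP.ne_empty

lemma eq_of_side_eq (h𝒟 : IsDyadicGrid 𝒟) {Q P : Cube n} (hQ : Q ∈ 𝒟) (hP : P ∈ 𝒟)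
    (hside : Q.side = P.side) {x : Euc n} (hxQ : x ∈ Q.set) (hxP : x ∈ P.set) : Q = P := by
  obtain ⟨k, hk⟩ := h𝒟.2.1 Q hQ
  obtain ⟨R, -, hR⟩ := h𝒟.2.2.1 k x
  rw [hR Q ⟨hQ, hk, hxQ⟩, hR P ⟨hP, hside ▸ hk, hxP⟩]

lemma exists_parent (hn : 0 < n) (h𝒟 : IsDyadicGrid 𝒟) {Q : Cube n} (hQ : Q ∈ 𝒟) :
    ∃ R ∈ 𝒟, Q.set ⊆ R.set ∧ R.side = 2 * Q.side := by
  obtain ⟨k, hk⟩ := h𝒟.2.1 Q hQ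
  obtain ⟨R, ⟨hR, hRside, hcorner⟩, -⟩ := h𝒟.2.2.1 (k + 1) (WithLp.toLp 2 Q.corner)
  have hRside' : R.side = 2 * Q.side := by rw [hRside, hk, zpow_add_one₀ two_ne_zero, mul_comm]
  refine ⟨R, hR, ?_, hRside'⟩
  refine (h𝒟.subset_or_subset hQ hR ⟨_, Q.corner_mem_set, hcorner⟩).resolve_right fun hRQ => ?_
  have := Cube.side_le_side_of_set_subset hn hRQ
  linarith [Q.side_pos]

end IsDyadicGrid

def maximalCubes {n : ℕ} (𝒟 : Set (Cube n)) (A : Cube n → ℝ) (t : ℝ) : Set (Cube n) :=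
  {Q | Q ∈ 𝒟 ∧ t < A Q ∧ ∀ R ∈ 𝒟, t < A R → Q.set ⊆ R.set → R = Q}

namespace IsDyadicGrid

variable {n : ℕ} {𝒟 : Set (Cube n)} {A : Cube n → ℝ}

lemma set_subset_of_mem_maximalCubes (h𝒟 : IsDyadicGrid 𝒟) {t t' : ℝ} (htt' : t ≤ t')
    {P Q : Cube n} (hP : P ∈ maximalCubes 𝒟 A t') (hQ : Q ∈ maximalCubes 𝒟 A t)
    (hPQ : (P.set ∩ Q.set).Nonempty) : P.set ⊆ Q.set := by
  rcases h𝒟.subset_or_subset hP.1 hQ.1 hPQ with hPQ | hQP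
  · exact hPQ
  · rw [hQ.2.2 P hP.1 (htt'.trans_lt hP.2.1) hQP]

lemma pairwiseDisjoint_maximalCubes (h𝒟 : IsDyadicGrid 𝒟) (t : ℝ) :
    (maximalCubes 𝒟 A t).PairwiseDisjoint Cube.set := by
  intro P hP Q hQ hne
  rw [Function.onFun, Set.disjoint_iff_inter_eq_empty, ← Set.not_nonempty_iff_eq_empty]
  intro hPQ
  exact hne (hP.2.2 Q hQ.1 hQ.2.1 (h𝒟.set_subset_of_mem_maximalCubes le_rfl hP hQ hPQ)).symm

lemma exists_mem_maximalCubes (hn : 0 < n) (h𝒟 : IsDyadicGrid 𝒟) {t : ℝ}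
    (hbdd : BddAbove (Cube.side '' {R | t < A R})) {R₀ : Cube n} (hR₀ : R₀ ∈ 𝒟)
    (ht : t < A R₀) {x : Euc n} (hx : x ∈ R₀.set) : ∃ M ∈ maximalCubes 𝒟 A t, x ∈ M.set := by
  -- The cubes through `x` on which `A` exceeds `t` have bounded sides; the largest one is maximal.
  let scales : Set ℤ := {j | ∃ R ∈ 𝒟, R.side = 2 ^ j ∧ x ∈ R.set ∧ t < A R}
  have hscales : BddAbove scales := by
    obtain ⟨L, hL⟩ := hbdd
    obtain ⟨N, hN⟩ := pow_unbounded_of_one_lt L _root_.one_lt_two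
    refine ⟨N, fun j ⟨R, _, hRj, _, hRt⟩ => ?_⟩
    have : (2 : ℝ) ^ j < 2 ^ (N : ℤ) := by
      rw [← hRj, zpow_natCast]; exact (hL ⟨R, hRt, rfl⟩).trans_lt hN
    exact ((zpow_lt_zpow_iff_right₀ _root_.one_lt_two).1 this).le
  obtain ⟨j₀, hj₀⟩ := h𝒟.2.1 R₀ hR₀
  obtain ⟨J, hJ⟩ := hscales
  obtain ⟨jm, ⟨M, hM, hMside, hxM, hMt⟩, hjm⟩ :=
    Int.exists_greatest_of_bdd ⟨J, fun j hj => hJ hj⟩ ⟨j₀, R₀, hR₀, hj₀, hx, ht⟩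
  refine ⟨M, ⟨hM, hMt, fun R hR hRt hMR => ?_⟩, hxM⟩
  obtain ⟨j, hj⟩ := h𝒟.2.1 R hR
  have hRM : R.side ≤ M.side := by
    rw [hj, hMside]
    exact zpow_le_zpow_right₀ one_le_two (hjm j ⟨R, hR, hj, hMR hxM, hRt⟩)
  exact h𝒟.eq_of_side_eq hR hM (hRM.antisymm (Cube.side_le_side_of_set_subset hn hMR))
    (hMR hxM) hxM

lemma exists_parent_of_mem_maximalCubes (hn : 0 < n) (h𝒟 : IsDyadicGrid 𝒟) {t : ℝ}
    {Q : Cube n} (hQ : Q ∈ maximalCubes 𝒟 A t) :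
    ∃ R, Q.set ⊆ R.set ∧ R.vol = 2 ^ n * Q.vol ∧ A R ≤ t := by
  obtain ⟨R, hR, hQR, hRside⟩ := h𝒟.exists_parent hn hQ.1
  have hRQ : R ≠ Q := fun h => by rw [h] at hRside; linarith [Q.side_pos]
  exact ⟨R, hQR, by rw [Cube.vol, Cube.vol, hRside, mul_pow],
    not_lt.1 fun h => hRQ (hQ.2.2 R hR h hQR)⟩

lemma inter_iUnion_maximalCubes_eq (h𝒟 : IsDyadicGrid 𝒟) {t t' : ℝ} (htt' : t ≤ t')
    {Q : Cube n} (hQ : Q ∈ maximalCubes 𝒟 A t) :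
    Q.set ∩ ⋃ P ∈ maximalCubes 𝒟 A t', P.set =
      ⋃ P ∈ {P ∈ maximalCubes 𝒟 A t' | P.set ⊆ Q.set}, P.set := by
  ext x
  simp only [mem_inter_iff, mem_iUnion, exists_prop, mem_ofPred_eq]
  constructor
  · rintro ⟨hxQ, P, hP, hxP⟩
    exact ⟨P, ⟨hP, h𝒟.set_subset_of_mem_maximalCubes htt' hP hQ ⟨x, hxP, hxQ⟩⟩, hxP⟩
  · rintro ⟨P, ⟨hP, hPQ⟩, hxP⟩
    exact ⟨hPQ hxP, P, hP, hxP⟩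

lemma set_subset_iUnion_maximalCubes (hn : 0 < n) (h𝒟 : IsDyadicGrid 𝒟) {t t' : ℝ}
    (htt' : t ≤ t') (hbdd : BddAbove (Cube.side '' {R | t < A R})) {Q : Cube n}
    (hQ : Q ∈ maximalCubes 𝒟 A t') : Q.set ⊆ ⋃ P ∈ maximalCubes 𝒟 A t, P.set := by
  intro x hx
  obtain ⟨M, hM, hxM⟩ := h𝒟.exists_mem_maximalCubes hn hbdd hQ.1 (htt'.trans_lt hQ.2.1) hx
  exact mem_biUnion hM hxM

lemma disjoint_diff_iUnion_maximalCubes (hn : 0 < n) (h𝒟 : IsDyadicGrid 𝒟) {θ : ℤ → ℝ}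
    (hθ : Monotone θ) (hbdd : ∀ k, BddAbove (Cube.side '' {R | θ k < A R})) {k k' : ℤ}
    {Q Q' : Cube n} (hQ : Q ∈ maximalCubes 𝒟 A (θ k)) (hQ' : Q' ∈ maximalCubes 𝒟 A (θ k'))
    (hne : (k, Q) ≠ (k', Q')) :
    Disjoint (Q.set \ ⋃ P ∈ maximalCubes 𝒟 A (θ (k + 1)), P.set)
      (Q'.set \ ⋃ P ∈ maximalCubes 𝒟 A (θ (k' + 1)), P.set) := by
  rcases lt_trichotomy k k' with hkk' | rfl | hk'k
  · refine Disjoint.mono_right sdiff_subset (disjoint_sdiff_left.mono_right ?_)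
    exact h𝒟.set_subset_iUnion_maximalCubes hn (hθ (Int.add_one_le_of_lt hkk')) (hbdd _) hQ'
  · have hQQ' : Q ≠ Q' := fun h => hne (h ▸ rfl)
    exact (h𝒟.pairwiseDisjoint_maximalCubes _ hQ hQ' hQQ').mono sdiff_subset sdiff_subset
  · refine Disjoint.mono_left sdiff_subset (disjoint_sdiff_right.mono_left ?_)
    exact h𝒟.set_subset_iUnion_maximalCubes hn (hθ (Int.add_one_le_of_lt hk'k)) (hbdd _) hQ

end IsDyadicGrid

lemma isSparse_iUnion {n : ℕ} {ι : Type*} {S : ι → Set (Cube n)} (E : ι → Cube n → Set (Euc n))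
    (hE : ∀ i, ∀ Q ∈ S i, E i Q ⊆ Q.set ∧ ENNReal.ofReal Q.vol ≤ 2 * volume (E i Q))
    (hdisj : ∀ i j, ∀ Q ∈ S i, ∀ Q' ∈ S j, (i, Q) ≠ (j, Q') → Disjoint (E i Q) (E j Q')) :
    IsSparse (⋃ i, S i) := by
  classical
  -- A cube may occur at several levels; any one will do, since distinct pairs have disjoint sets.
  refine ⟨fun Q => if h : ∃ i, Q ∈ S i then E h.choose Q else ∅, fun Q hQ => ?_,
    fun Q hQ Q' hQ' hne => ?_⟩
  · obtain h := mem_iUnion.1 hQ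
    simpa only [dif_pos h] using hE _ Q h.choose_spec
  · obtain h := mem_iUnion.1 hQ
    obtain h' := mem_iUnion.1 hQ'
    simp only [dif_pos h, dif_pos h']
    exact hdisj _ _ Q h.choose_spec Q' h'.choose_spec fun heq => hne (congrArg Prod.snd heq)

lemma MeasureTheory.measure_le_two_mul_measure_diff {α : Type*} [MeasurableSpace α]
    {μ : Measure α} {s u : Set α} (hu : MeasurableSet u) (hs : μ s ≠ ∞)
    (h : μ (s ∩ u) ≤ μ s / 2) : μ s ≤ 2 * μ (s \ u) := by
  have hsplit := measure_inter_add_sdiff (μ := μ) s hu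
  have : μ s / 2 ≤ μ (s \ u) := by
    rw [← ENNReal.sub_half hs, tsub_le_iff_left]
    exact hsplit.symm.le.trans (by gcongr)
  calc μ s = 2 * (μ s / 2) := (ENNReal.mul_div_cancel two_ne_zero ofNat_ne_top).symm
    _ ≤ 2 * μ (s \ u) := by gcongr

lemma ENNReal.div_rpow_mul_div_rpow_mul_self {V : ℝ≥0∞} (hV0 : V ≠ 0) (hV : V ≠ ∞) (X Y : ℝ≥0∞)
    {a b : ℝ} (ha : 0 ≤ a) (hb : 0 ≤ b) (hab : a + b = 1) :
    (X / V) ^ a * (Y / V) ^ b * V = X ^ a * Y ^ b := by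
  have hVa0 : V ^ a ≠ 0 := by simp [ENNReal.rpow_eq_zero_iff, hV0, hV]
  have hVa : V ^ a ≠ ∞ := by simp [ENNReal.rpow_eq_top_iff, hV0, hV]
  rw [ENNReal.div_rpow_of_nonneg _ _ ha, ENNReal.div_rpow_of_nonneg _ _ hb, div_eq_mul_inv,
    div_eq_mul_inv, mul_mul_mul_comm, ← ENNReal.mul_inv (.inl hVa0) (.inl hVa),
    ← ENNReal.rpow_add _ _ hV0 hV, hab, ENNReal.rpow_one, mul_assoc,
    ENNReal.inv_mul_cancel hV0 hV, mul_one]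

lemma ENNReal.tsum_rpow_mul_rpow_le {ι : Type*} (u v : ι → ℝ≥0∞) {a b : ℝ}
    (ha : 0 < a) (hb : 0 < b) (hab : a + b = 1) :
    ∑' i, u i ^ a * v i ^ b ≤ (∑' i, u i) ^ a * (∑' i, v i) ^ b := by
  let _ : MeasurableSpace ι := ⊤
  have hpq : Real.HolderConjugate a⁻¹ b⁻¹ := by
    rw [Real.holderConjugate_iff, inv_inv, inv_inv]
    exact ⟨one_lt_inv_iff₀.2 ⟨ha, by linarith⟩, hab⟩
  have H := ENNReal.lintegral_mul_le_Lp_mul_Lq Measure.count hpq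
    (f := fun i => u i ^ a) (g := fun i => v i ^ b) measurable_from_top.aemeasurable
    measurable_from_top.aemeasurable
  simpa only [Pi.mul_apply, lintegral_count, ← ENNReal.rpow_mul, mul_inv_cancel₀ ha.ne',
    mul_inv_cancel₀ hb.ne', ENNReal.rpow_one, one_div, inv_inv] using H

section Averages

variable {n : ℕ} {f g : Euc n → ℝ}

lemma lrAvg_nonneg (r : ℝ) (Q : Cube n) (f : Euc n → ℝ) : 0 ≤ lrAvg r Q f :=
  Real.rpow_nonneg (div_nonneg (integral_nonneg fun _ => Real.rpow_nonneg (abs_nonneg _) r)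
    Q.vol_pos.le) _

lemma integrableOn_abs_rpow (hf : Measurable f) {C : ℝ} (hC : ∀ x, |f x| ≤ C) {r : ℝ}
    (hr : 0 ≤ r) {s : Set (Euc n)} (hs : volume s ≠ ∞) :
    IntegrableOn (fun x => |f x| ^ r) s := by
  refine Measure.integrableOn_of_bounded hs (hf.abs.pow_const r).aestronglyMeasurable
    (M := |C| ^ r) (.of_forall fun x => ?_)
  rw [Real.norm_eq_abs, abs_of_nonneg (Real.rpow_nonneg (abs_nonneg _) r)]
  exact Real.rpow_le_rpow (abs_nonneg _) ((hC x).trans (le_abs_self C)) hr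

lemma integrable_abs_rpow (hf : Measurable f) {C : ℝ} (hC : ∀ x, |f x| ≤ C)
    (hfc : HasCompactSupport f) {r : ℝ} (hr : 0 < r) : Integrable (fun x => |f x| ^ r) := by
  have hc : HasCompactSupport fun x => |f x| ^ r :=
    hfc.comp_left (g := fun y => |y| ^ r) (by simp [Real.zero_rpow hr.ne'])
  rw [← integrableOn_iff_integrable_of_support_subset (subset_tsupport _)]
  exact integrableOn_abs_rpow hf hC hr.le hc.isCompact.measure_lt_top.ne

lemma ofReal_lrAvg (hf : Measurable f) {C : ℝ} (hC : ∀ x, |f x| ≤ C) {r : ℝ} (hr : 0 ≤ r)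
    (Q : Cube n) : ENNReal.ofReal (lrAvg r Q f) =
      ((∫⁻ x in Q.set, ENNReal.ofReal (|f x| ^ r)) / ENNReal.ofReal Q.vol) ^ (1 / r) := by
  have hint := integrableOn_abs_rpow hf hC hr (s := Q.set) (by simp [Cube.volume_set])
  rw [lrAvg, ← ENNReal.ofReal_rpow_of_nonneg (div_nonneg (integral_nonneg fun _ =>
      Real.rpow_nonneg (abs_nonneg _) r) Q.vol_pos.le) (by positivity),
    ENNReal.ofReal_div_of_pos Q.vol_pos, ofReal_integral_eq_lintegral_ofReal hint
      (.of_forall fun _ => Real.rpow_nonneg (abs_nonneg _) r)]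

lemma ofReal_lrAvg_mul_lrAvg_rpow_mul_vol (hf : Measurable f) (hg : Measurable g) {Cf Cg : ℝ}
    (hCf : ∀ x, |f x| ≤ Cf) (hCg : ∀ x, |g x| ≤ Cg) {r₁ r₂ : ℝ} (hr₁ : 0 < r₁) (hr₂ : 0 < r₂)
    (Q : Cube n) :
    ENNReal.ofReal (lrAvg r₁ Q f * lrAvg r₂ Q g) ^ (1 / r₁ + 1 / r₂)⁻¹ * ENNReal.ofReal Q.vol =
      (∫⁻ x in Q.set, ENNReal.ofReal (|f x| ^ r₁)) ^ (r₁ * (1 / r₁ + 1 / r₂))⁻¹ *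
        (∫⁻ x in Q.set, ENNReal.ofReal (|g x| ^ r₂)) ^ (r₂ * (1 / r₁ + 1 / r₂))⁻¹ := by
  have hs : 0 < 1 / r₁ + 1 / r₂ := by positivity
  have hexp : ∀ r, 0 < r → 1 / r * (1 / r₁ + 1 / r₂)⁻¹ = (r * (1 / r₁ + 1 / r₂))⁻¹ :=
    fun r _ => by rw [one_div, mul_inv]
  rw [ENNReal.ofReal_mul (lrAvg_nonneg _ _ _), ofReal_lrAvg hf hCf hr₁.le,
    ofReal_lrAvg hg hCg hr₂.le, ENNReal.mul_rpow_of_nonneg _ _ (by positivity),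
    ← ENNReal.rpow_mul, ← ENNReal.rpow_mul, hexp r₁ hr₁, hexp r₂ hr₂]
  refine ENNReal.div_rpow_mul_div_rpow_mul_self (by simpa using Q.vol_pos) ENNReal.ofReal_ne_top
    _ _ (by positivity) (by positivity) ?_
  field_simp

lemma lrAvg_mul_vol_rpow_le (hf : Measurable f) {C : ℝ} (hC : ∀ x, |f x| ≤ C)
    (hfc : HasCompactSupport f) {r : ℝ} (hr : 0 < r) (Q : Cube n) :
    lrAvg r Q f * Q.vol ^ (1 / r) ≤ (∫ x, |f x| ^ r) ^ (1 / r) := by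
  have hnonneg : ∀ x, 0 ≤ |f x| ^ r := fun _ => Real.rpow_nonneg (abs_nonneg _) r
  rw [lrAvg, ← Real.mul_rpow (div_nonneg (integral_nonneg hnonneg) Q.vol_pos.le) Q.vol_pos.le,
    div_mul_cancel₀ _ Q.vol_pos.ne']
  exact Real.rpow_le_rpow (integral_nonneg hnonneg)
    (setIntegral_le_integral (integrable_abs_rpow hf hC hfc hr) (.of_forall hnonneg))
    (by positivity)

lemma bddAbove_side_of_lt_lrAvg_mul_lrAvg (hn : 0 < n) (hf : Measurable f) (hg : Measurable g)
    {Cf Cg : ℝ} (hCf : ∀ x, |f x| ≤ Cf) (hCg : ∀ x, |g x| ≤ Cg) (hfc : HasCompactSupport f)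
    (hgc : HasCompactSupport g) {r₁ r₂ : ℝ} (hr₁ : 0 < r₁) (hr₂ : 0 < r₂) {t : ℝ} (ht : 0 < t) :
    BddAbove (Cube.side '' {R | t < lrAvg r₁ R f * lrAvg r₂ R g}) := by
  set C := (∫ x, |f x| ^ r₁) ^ (1 / r₁) * (∫ x, |g x| ^ r₂) ^ (1 / r₂)
  have hC : 0 ≤ C := mul_nonneg
    (Real.rpow_nonneg (integral_nonneg fun _ => Real.rpow_nonneg (abs_nonneg _) _) _)
    (Real.rpow_nonneg (integral_nonneg fun _ => Real.rpow_nonneg (abs_nonneg _) _) _)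
  have hns : 0 < n * (1 / r₁ + 1 / r₂) := by positivity
  refine ⟨(C / t) ^ (n * (1 / r₁ + 1 / r₂))⁻¹, ?_⟩
  rintro _ ⟨R, hR, rfl⟩
  have hdecay : t * R.vol ^ (1 / r₁ + 1 / r₂) ≤ C := calc
    t * R.vol ^ (1 / r₁ + 1 / r₂)
        ≤ (lrAvg r₁ R f * R.vol ^ (1 / r₁)) * (lrAvg r₂ R g * R.vol ^ (1 / r₂)) := by
      rw [Real.rpow_add R.vol_pos, mul_mul_mul_comm]
      exact mul_le_mul_of_nonneg_right hR.le
        (mul_nonneg (Real.rpow_nonneg R.vol_pos.le _) (Real.rpow_nonneg R.vol_pos.le _))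
    _ ≤ C := mul_le_mul (lrAvg_mul_vol_rpow_le hf hCf hfc hr₁ R)
        (lrAvg_mul_vol_rpow_le hg hCg hgc hr₂ R)
        (mul_nonneg (lrAvg_nonneg _ _ _) (Real.rpow_nonneg R.vol_pos.le _))
        (Real.rpow_nonneg (integral_nonneg fun _ => Real.rpow_nonneg (abs_nonneg _) _) _)
  rw [Real.le_rpow_inv_iff_of_pos R.side_pos.le (div_nonneg hC ht.le) hns,
    Real.rpow_natCast_mul R.side_pos.le, le_div_iff₀ ht, mul_comm]
  exact hdecay

end Averages

section Packing

variable {n : ℕ} {f g : Euc n → ℝ}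

lemma rpow_mul_tsum_vol_le (hf : Measurable f) (hg : Measurable g) {Cf Cg : ℝ}
    (hCf : ∀ x, |f x| ≤ Cf) (hCg : ∀ x, |g x| ≤ Cg) {r₁ r₂ : ℝ} (hr₁ : 0 < r₁) (hr₂ : 0 < r₂)
    {T : Set (Cube n)} [Countable T] (hT : T.PairwiseDisjoint Cube.set) {R : Cube n}
    (hTR : ∀ P ∈ T, P.set ⊆ R.set) {t u : ℝ} (ht : ∀ P ∈ T, t < lrAvg r₁ P f * lrAvg r₂ P g)
    (hu : lrAvg r₁ R f * lrAvg r₂ R g ≤ u) :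
    ENNReal.ofReal t ^ (1 / r₁ + 1 / r₂)⁻¹ * ∑' P : T, ENNReal.ofReal (P : Cube n).vol ≤
      ENNReal.ofReal u ^ (1 / r₁ + 1 / r₂)⁻¹ * ENNReal.ofReal R.vol := by
  have hsum (F : Euc n → ℝ≥0∞) :
      ∑' P : T, ∫⁻ x in (P : Cube n).set, F x ≤ ∫⁻ x in R.set, F x := by
    rw [← lintegral_iUnion (fun P : T => (P : Cube n).measurableSet_set)
      fun P P' hne => hT P.2 P'.2 (Subtype.coe_ne_coe.2 hne)]
    exact lintegral_mono_set (iUnion_subset fun P => hTR P P.2)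
  calc ENNReal.ofReal t ^ (1 / r₁ + 1 / r₂)⁻¹ * ∑' P : T, ENNReal.ofReal (P : Cube n).vol
      = ∑' P : T, ENNReal.ofReal t ^ (1 / r₁ + 1 / r₂)⁻¹ * ENNReal.ofReal (P : Cube n).vol :=
        ENNReal.tsum_mul_left.symm
    _ ≤ ∑' P : T, ENNReal.ofReal (lrAvg r₁ P f * lrAvg r₂ P g) ^ (1 / r₁ + 1 / r₂)⁻¹ *
          ENNReal.ofReal (P : Cube n).vol :=
        ENNReal.tsum_le_tsum fun P => by gcongr; exact (ht P P.2).le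
    _ = ∑' P : T, (∫⁻ x in (P : Cube n).set, ENNReal.ofReal (|f x| ^ r₁)) ^
            (r₁ * (1 / r₁ + 1 / r₂))⁻¹ *
          (∫⁻ x in (P : Cube n).set, ENNReal.ofReal (|g x| ^ r₂)) ^ (r₂ * (1 / r₁ + 1 / r₂))⁻¹ :=
        tsum_congr fun P => ofReal_lrAvg_mul_lrAvg_rpow_mul_vol hf hg hCf hCg hr₁ hr₂ P
    _ ≤ (∑' P : T, ∫⁻ x in (P : Cube n).set, ENNReal.ofReal (|f x| ^ r₁)) ^
            (r₁ * (1 / r₁ + 1 / r₂))⁻¹ *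
          (∑' P : T, ∫⁻ x in (P : Cube n).set, ENNReal.ofReal (|g x| ^ r₂)) ^
            (r₂ * (1 / r₁ + 1 / r₂))⁻¹ :=
        ENNReal.tsum_rpow_mul_rpow_le _ _ (by positivity) (by positivity) (by field_simp)
    _ ≤ (∫⁻ x in R.set, ENNReal.ofReal (|f x| ^ r₁)) ^ (r₁ * (1 / r₁ + 1 / r₂))⁻¹ *
          (∫⁻ x in R.set, ENNReal.ofReal (|g x| ^ r₂)) ^ (r₂ * (1 / r₁ + 1 / r₂))⁻¹ := by
        gcongr <;> exact hsum _
    _ = ENNReal.ofReal (lrAvg r₁ R f * lrAvg r₂ R g) ^ (1 / r₁ + 1 / r₂)⁻¹ *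
          ENNReal.ofReal R.vol :=
        (ofReal_lrAvg_mul_lrAvg_rpow_mul_vol hf hg hCf hCg hr₁ hr₂ R).symm
    _ ≤ ENNReal.ofReal u ^ (1 / r₁ + 1 / r₂)⁻¹ * ENNReal.ofReal R.vol := by gcongr

lemma ofReal_two_rpow_mul_rpow_inv (x : ℝ) {s : ℝ} (hs : 0 < s) :
    ENNReal.ofReal ((2 : ℝ) ^ (x * s)) ^ s⁻¹ = ENNReal.ofReal (2 ^ x) := by
  rw [ENNReal.ofReal_rpow_of_nonneg (by positivity) (by positivity), ← Real.rpow_mul zero_le_two,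
    mul_inv_cancel_right₀ hs.ne']

lemma ENNReal.le_ofReal_div_two_of_ofReal_two_mul_mul_le {a b : ℝ} (ha : 0 < a) {x : ℝ≥0∞}
    (h : ENNReal.ofReal (2 * a) * x ≤ ENNReal.ofReal (a * b)) : x ≤ ENNReal.ofReal b / 2 := by
  rw [ENNReal.ofReal_mul zero_le_two, ENNReal.ofReal_ofNat, mul_comm 2, mul_assoc,
    ENNReal.ofReal_mul ha.le] at h
  rw [ENNReal.le_div_iff_mul_le (.inl two_ne_zero) (.inl ofNat_ne_top), mul_comm]
  exact (ENNReal.mul_le_mul_iff_right (by simpa using ha) ofReal_ne_top).1 h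

lemma volume_inter_iUnion_maximalCubes_le (hn : 0 < n) {𝒟 : Set (Cube n)}
    (h𝒟 : IsDyadicGrid 𝒟) (hf : Measurable f) (hg : Measurable g) {Cf Cg : ℝ}
    (hCf : ∀ x, |f x| ≤ Cf) (hCg : ∀ x, |g x| ≤ Cg) {r₁ r₂ : ℝ} (hr₁ : 0 < r₁) (hr₂ : 0 < r₂)
    {k : ℤ} {Q : Cube n} (hQ : Q ∈ maximalCubes 𝒟 (fun R => lrAvg r₁ R f * lrAvg r₂ R g)
      (2 ^ ((k : ℝ) * (n + 1) * (1 / r₁ + 1 / r₂)))) :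
    volume (Q.set ∩ ⋃ P ∈ maximalCubes 𝒟 (fun R => lrAvg r₁ R f * lrAvg r₂ R g)
      (2 ^ (((k + 1 : ℤ) : ℝ) * (n + 1) * (1 / r₁ + 1 / r₂))), P.set) ≤
        ENNReal.ofReal Q.vol / 2 := by
  set s := 1 / r₁ + 1 / r₂
  have hs : 0 < s := by positivity
  have hθ : (2 : ℝ) ^ ((k : ℝ) * (n + 1) * s) ≤ 2 ^ (((k + 1 : ℤ) : ℝ) * (n + 1) * s) := by
    gcongr
    · norm_num
    · linarith
  set T := {P ∈ maximalCubes 𝒟 (fun R => lrAvg r₁ R f * lrAvg r₂ R g)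
    (2 ^ (((k + 1 : ℤ) : ℝ) * (n + 1) * s)) | P.set ⊆ Q.set}
  have hT : T.PairwiseDisjoint Cube.set :=
    (h𝒟.pairwiseDisjoint_maximalCubes _).subset (sep_subset _ _)
  have hTcount : T.Countable := h𝒟.1.mono fun P hP => hP.1.1
  have : Countable T := hTcount.to_subtype
  obtain ⟨R, hQR, hRvol, hAR⟩ := h𝒟.exists_parent_of_mem_maximalCubes hn hQ
  have hpack := rpow_mul_tsum_vol_le hf hg hCf hCg hr₁ hr₂ hT (fun P hP => hP.2.trans hQR)
    (fun P hP => hP.1.2.1) hAR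
  have hgrowth :
      (2 : ℝ) ^ (((k + 1 : ℤ) : ℝ) * (n + 1)) = 2 * (2 ^ ((k : ℝ) * (n + 1)) * 2 ^ n) := by
    rw [show ((k + 1 : ℤ) : ℝ) * (n + 1) = 1 + ((k : ℝ) * (n + 1) + n) by push_cast; ring,
      Real.rpow_add two_pos, Real.rpow_add two_pos, Real.rpow_one, Real.rpow_natCast]
  rw [ofReal_two_rpow_mul_rpow_inv _ hs, ofReal_two_rpow_mul_rpow_inv _ hs, hgrowth, hRvol,
    ← ENNReal.ofReal_mul (by positivity), ← mul_assoc _ (2 ^ n : ℝ)] at hpack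
  rw [h𝒟.inter_iUnion_maximalCubes_eq hθ hQ, measure_biUnion hTcount hT fun P _ =>
    P.measurableSet_set]
  simp only [Cube.volume_set]
  exact ENNReal.le_ofReal_div_two_of_ofReal_two_mul_mul_le (by positivity) hpack

end Packing

theorem stmt16_general {n : ℕ} (hn : 0 < n) {p₁ p₂ m₁ m₂ : ℝ}
    (hp₁ : 1 < p₁) (hp₂ : 1 < p₂)
    (hm₁ : 1 < m₁) (hm₂ : 1 < m₂)
    (𝒟 : Set (Cube n)) (h𝒟 : IsDyadicGrid 𝒟)
    (f g : Euc n → ℝ) (hf : Measurable f) (hg : Measurable g)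
    (hf0 : ∀ x, 0 ≤ f x) (hg0 : ∀ x, 0 ≤ g x)
    (hfb : ∃ Cf : ℝ, ∀ x, f x ≤ Cf) (hgb : ∃ Cg : ℝ, ∀ x, g x ≤ Cg)
    (hfc : HasCompactSupport f) (hgc : HasCompactSupport g)
    (S : ℤ → Set (Cube n))
    (hS : ∀ (k : ℤ) (Q : Cube n), Q ∈ S k ↔
      Q ∈ 𝒟 ∧ (2 : ℝ) ^ ((k : ℝ) * ((n : ℝ) + 1) * (m₁ / p₁ + m₂ / p₂)) < lrAvg (p₁ / m₁) Q f * lrAvg (p₂ / m₂) Q g ∧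
        ∀ R ∈ 𝒟, (2 : ℝ) ^ ((k : ℝ) * ((n : ℝ) + 1) * (m₁ / p₁ + m₂ / p₂)) < lrAvg (p₁ / m₁) R f * lrAvg (p₂ / m₂) R g →
          Q.set ⊆ R.set → R = Q) :
    (∀ k : ℤ, ∀ Q ∈ S k,
      volume (Q.set ∩ ⋃ P ∈ S (k + 1), Cube.set P) ≤ ENNReal.ofReal Q.vol / 2) ∧
    (∀ k k' : ℤ, ∀ Q ∈ S k, ∀ Q' ∈ S k', (k, Q) ≠ (k', Q') →
      Disjoint (Q.set \ ⋃ P ∈ S (k + 1), Cube.set P)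
        (Q'.set \ ⋃ P ∈ S (k' + 1), Cube.set P)) ∧
    (∀ k : ℤ, ∀ Q ∈ S k,
      ENNReal.ofReal Q.vol ≤ 2 * volume (Q.set \ ⋃ P ∈ S (k + 1), Cube.set P)) ∧
    IsSparse (⋃ k : ℤ, S k) := by
  obtain ⟨Cf, hCf⟩ := hfb
  obtain ⟨Cg, hCg⟩ := hgb
  replace hCf : ∀ x, |f x| ≤ Cf := fun x => (abs_of_nonneg (hf0 x)).trans_le (hCf x)
  replace hCg : ∀ x, |g x| ≤ Cg := fun x => (abs_of_nonneg (hg0 x)).trans_le (hCg x)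
  have hr₁ : 0 < p₁ / m₁ := div_pos (by linarith) (by linarith)
  have hr₂ : 0 < p₂ / m₂ := div_pos (by linarith) (by linarith)
  set A : Cube n → ℝ := fun Q => lrAvg (p₁ / m₁) Q f * lrAvg (p₂ / m₂) Q g
  set θ : ℤ → ℝ := fun k => 2 ^ ((k : ℝ) * (n + 1) * (1 / (p₁ / m₁) + 1 / (p₂ / m₂)))
  obtain rfl : S = fun k => maximalCubes 𝒟 A (θ k) := by
    funext k
    ext Q
    simp only [hS, θ, one_div_div]
    rfl
  have hs : 0 < 1 / (p₁ / m₁) + 1 / (p₂ / m₂) := by positivity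
  have hθ : Monotone θ := fun k k' hkk' => Real.rpow_le_rpow_of_exponent_le one_le_two <|
    mul_le_mul_of_nonneg_right (mul_le_mul_of_nonneg_right (Int.cast_le.2 hkk') (by positivity))
      hs.le
  have hbdd (k : ℤ) : BddAbove (Cube.side '' {R | θ k < A R}) :=
    bddAbove_side_of_lt_lrAvg_mul_lrAvg hn hf hg hCf hCg hfc hgc hr₁ hr₂ (by positivity)
  have hhalf (k : ℤ) (Q : Cube n) (hQ : Q ∈ maximalCubes 𝒟 A (θ k)) :=
    volume_inter_iUnion_maximalCubes_le hn h𝒟 hf hg hCf hCg hr₁ hr₂ hQ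
  have hdisj (k k' : ℤ) (Q : Cube n) (hQ : Q ∈ maximalCubes 𝒟 A (θ k)) (Q' : Cube n)
      (hQ' : Q' ∈ maximalCubes 𝒟 A (θ k')) (hne : (k, Q) ≠ (k', Q')) :=
    h𝒟.disjoint_diff_iUnion_maximalCubes hn hθ hbdd hQ hQ' hne
  have hlarge (k : ℤ) (Q : Cube n) (hQ : Q ∈ maximalCubes 𝒟 A (θ k)) :
      ENNReal.ofReal Q.vol ≤ 2 * volume (Q.set \ ⋃ P ∈ maximalCubes 𝒟 A (θ (k + 1)), P.set) := by
    rw [← Q.volume_set]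
    refine measure_le_two_mul_measure_diff ?_ (by simp [Cube.volume_set]) ?_
    · exact .biUnion (h𝒟.1.mono fun P hP => hP.1) fun P _ => P.measurableSet_set
    · simpa only [Cube.volume_set] using hhalf k Q hQ
  exact ⟨hhalf, hdisj, hlarge,
    isSparse_iUnion _ (fun k Q hQ => ⟨sdiff_subset, hlarge k Q hQ⟩) hdisj⟩

theorem stmt16 {n : ℕ} (hn : 0 < n) {p₁ p₂ m₁ m₂ : ℝ}
    (hp₁ : 1 < p₁) (hp₂ : 1 < p₂)
    (hm₁ : 1 < m₁) (hm₁' : m₁ ≤ p₁) (hm₂ : 1 < m₂) (hm₂' : m₂ ≤ p₂)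
    (𝒟 : Set (Cube n)) (h𝒟 : IsDyadicGrid 𝒟)
    (f g : Euc n → ℝ) (hf : Measurable f) (hg : Measurable g)
    (hf0 : ∀ x, 0 ≤ f x) (hg0 : ∀ x, 0 ≤ g x)
    (hfb : ∃ Cf : ℝ, ∀ x, f x ≤ Cf) (hgb : ∃ Cg : ℝ, ∀ x, g x ≤ Cg)
    (hfc : HasCompactSupport f) (hgc : HasCompactSupport g)
    (S : ℤ → Set (Cube n))
    (hS : ∀ (k : ℤ) (Q : Cube n), Q ∈ S k ↔
      Q ∈ 𝒟 ∧ (2 : ℝ) ^ ((k : ℝ) * ((n : ℝ) + 1) * (m₁ / p₁ + m₂ / p₂)) < lrAvg (p₁ / m₁) Q f * lrAvg (p₂ / m₂) Q g ∧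
        ∀ R ∈ 𝒟, (2 : ℝ) ^ ((k : ℝ) * ((n : ℝ) + 1) * (m₁ / p₁ + m₂ / p₂)) < lrAvg (p₁ / m₁) R f * lrAvg (p₂ / m₂) R g →
          Q.set ⊆ R.set → R = Q) :
    (∀ k : ℤ, ∀ Q ∈ S k,
      volume (Q.set ∩ ⋃ P ∈ S (k + 1), Cube.set P) ≤ ENNReal.ofReal Q.vol / 2) ∧
    (∀ k k' : ℤ, ∀ Q ∈ S k, ∀ Q' ∈ S k', (k, Q) ≠ (k', Q') →
      Disjoint (Q.set \ ⋃ P ∈ S (k + 1), Cube.set P)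
        (Q'.set \ ⋃ P ∈ S (k' + 1), Cube.set P)) ∧
    (∀ k : ℤ, ∀ Q ∈ S k,
      ENNReal.ofReal Q.vol ≤ 2 * volume (Q.set \ ⋃ P ∈ S (k + 1), Cube.set P)) ∧
    IsSparse (⋃ k : ℤ, S k) :=
  stmt16_general hn hp₁ hp₂ hm₁ hm₂ 𝒟 h𝒟 f g hf hg hf0 hg0 hfb hgb hfc hgc S hS

end
end
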